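/- Let u be the weak solution and ũ_h ∈ Ṽ_h the Galerkin solution of the quasilinear problem, with κ_j ∈ C¹ and Lipschitz in the second variable, κ_min ≤ κ_j ≤ κ_max, and ‖ũ_h‖₁ ≤ C₀⁻¹‖f‖. Let φ ∈ H¹₀(Ω) solve the linearized adjoint problem ā(σ; v, φ) + b̄(σ; v, φ) = (v, u − ũ_h)_{L²} for all v ∈ H¹₀(Ω), where σ(t) = ũ_h + t(u − ũ_h). Then there is C > 0 independent of u and h such that ‖u − ũ_h‖_{L²}² ≤ C |φ − w̃_h|₁ |u − ũ_h|₁ for every w̃_h ∈ Ṽ_h. -/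

import Mathlib

open MeasureTheory

/-- A concrete model of `H¹₀(0, L)`. -/
def H10 (L : ℝ) : Set (ℝ → ℝ) :=
  {w | ContinuousOn w (Set.Icc 0 L) ∧ w 0 = 0 ∧ w L = 0 ∧
    (∀ x ∈ Set.Ioo 0 L, DifferentiableAt ℝ w x) ∧
    IntervalIntegrable (deriv w) volume 0 L ∧
    IntervalIntegrable (fun x => (deriv w x) ^ 2) volume 0 L ∧
    IntervalIntegrable (fun x => (w x) ^ 2) volume 0 L}

/-- The quasilinear form `a(v; z, w) = Σ_j ∫_{Ω_j} κ_j(x, v(x)) z'(x) w'(x) dx`. -/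
noncomputable def formA (m : ℕ) (s : ℕ → ℝ) (κ : ℕ → ℝ → ℝ → ℝ) (v z w : ℝ → ℝ) : ℝ :=
  ∑ j ∈ Finset.range (m + 1), ∫ x in (s j)..(s (j + 1)), κ j x (v x) * deriv z x * deriv w x

/-- The averaged linearized form `ā(σ; v, w)` for `σ(t) = ũ_h + t(u − ũ_h)`. -/
noncomputable def formAbar (m : ℕ) (s : ℕ → ℝ) (κ : ℕ → ℝ → ℝ → ℝ)
    (uh u v w : ℝ → ℝ) : ℝ :=
  ∑ j ∈ Finset.range (m + 1), ∫ x in (s j)..(s (j + 1)),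
    (∫ t in (0:ℝ)..1, κ j x (uh x + t * (u x - uh x))) * deriv v x * deriv w x

/-- The averaged linearized form `b̄(σ; v, w)`, where `κ'` is `D₂κ`. -/
noncomputable def formBbar (m : ℕ) (s : ℕ → ℝ) (κ' : ℕ → ℝ → ℝ → ℝ)
    (uh u v w : ℝ → ℝ) : ℝ :=
  ∑ j ∈ Finset.range (m + 1), ∫ x in (s j)..(s (j + 1)),
    (∫ t in (0:ℝ)..1, κ' j x (uh x + t * (u x - uh x)) *
        (deriv uh x + t * (deriv u x - deriv uh x))) * v x * deriv w x

/-!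
Testing the adjoint problem with `e = u - ũ_h` gives `‖e‖² = ā(σ; e, φ) + b̄(σ; e, φ)`, and the
integral mean value theorem along `σ(t) = ũ_h + t e` turns `ā(σ; e, w) + b̄(σ; e, w)` into the
residual `a(u; u, w) - a(ũ_h; ũ_h, w)`, which vanishes at `w = w̃_h` by Galerkin orthogonality.
So `‖e‖²` is the residual tested with `φ - w̃_h`. Writing
`κ(u) u' - κ(ũ_h) ũ_h' = κ(u) e' + (κ(u) - κ(ũ_h)) ũ_h'` bounds its integrand by
`(κ_max |e'| + C_L ‖e‖_∞ |ũ_h'|) |φ' - w̃_h'|`; Cauchy–Schwarz, `‖e‖_∞ ≤ C_Ω |e|₁` and the a priori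
bound on `|ũ_h|₁` give the estimate with `C = κ_max + C_L C_Ω C₀⁻¹ ‖f‖`.
-/

open Set
open scoped ENNReal Interval

section L2

variable {α : Type*} [MeasurableSpace α] {μ : Measure α} {f g h : α → ℝ}

theorem MeasureTheory.MemLp.sqrt_integral_sq_eq_norm_toLp (hf : MemLp f 2 μ) :
    √(∫ x, f x ^ 2 ∂μ) = ‖hf.toLp f‖ := by
  rw [← Real.sqrt_sq (norm_nonneg (hf.toLp f)), ← real_inner_self_eq_norm_sq, L2.inner_def]
  congr 1
  refine integral_congr_ae ?_
  filter_upwards [hf.coeFn_toLp] with x hx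
  simp [hx, sq]

theorem integral_mul_le_sqrt_mul_sqrt (hf : MemLp f 2 μ) (hg : MemLp g 2 μ) :
    ∫ x, f x * g x ∂μ ≤ √(∫ x, f x ^ 2 ∂μ) * √(∫ x, g x ^ 2 ∂μ) := by
  rw [hf.sqrt_integral_sq_eq_norm_toLp, hg.sqrt_integral_sq_eq_norm_toLp]
  refine le_of_eq_of_le ?_ (real_inner_le_norm _ _)
  rw [L2.inner_def]
  refine integral_congr_ae ?_
  filter_upwards [hf.coeFn_toLp, hg.coeFn_toLp] with x hfx hgx
  simp [hfx, hgx, mul_comm]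

theorem integral_add_mul_abs_le {a b : ℝ} (ha : 0 ≤ a) (hb : 0 ≤ b) (hf : MemLp f 2 μ)
    (hg : MemLp g 2 μ) (hh : MemLp h 2 μ) :
    ∫ x, (a * |f x| + b * |g x|) * |h x| ∂μ ≤
      (a * √(∫ x, f x ^ 2 ∂μ) + b * √(∫ x, g x ^ 2 ∂μ)) * √(∫ x, h x ^ 2 ∂μ) := by
  have hfh := integral_mul_le_sqrt_mul_sqrt hf.abs hh.abs
  have hgh := integral_mul_le_sqrt_mul_sqrt hg.abs hh.abs
  simp only [Pi.abs_apply, sq_abs] at hfh hgh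
  simp only [add_mul, mul_assoc]
  have hfh_int : Integrable (fun x => |f x| * |h x|) μ := hf.abs.integrable_mul hh.abs
  have hgh_int : Integrable (fun x => |g x| * |h x|) μ := hg.abs.integrable_mul hh.abs
  rw [integral_add (hfh_int.const_mul a) (hgh_int.const_mul b), integral_const_mul,
    integral_const_mul]
  gcongr

end L2

theorem abs_add_mul_le {t : ℝ} (ht : t ∈ Icc (0:ℝ) 1) (c d : ℝ) : |c + t * d| ≤ |c| + |d| :=
  (abs_add_le _ _).trans (by
    rw [abs_mul, abs_of_nonneg ht.1]; gcongr; nlinarith [abs_nonneg d, ht.2])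

theorem abs_mul_sub_mul_le_of_lipschitz {k : ℝ → ℝ} {M CL : ℝ} (hM : ∀ y, |k y| ≤ M)
    (hlip : ∀ y₁ y₂, |k y₁ - k y₂| ≤ CL * |y₁ - y₂|) (a b p q : ℝ) :
    |k a * p - k b * q| ≤ M * |p - q| + CL * |a - b| * |q| := by
  calc |k a * p - k b * q| = |k a * (p - q) + (k a - k b) * q| := by ring_nf
    _ ≤ |k a| * |p - q| + |k a - k b| * |q| := by
        rw [← abs_mul, ← abs_mul]; exact abs_add_le _ _
    _ ≤ M * |p - q| + CL * |a - b| * |q| := by gcongr <;> simp only [hM, hlip]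

/-- Fundamental theorem of calculus for `t ↦ g (a + t b) (c + t d)` on `[0, 1]`. -/
theorem integral_unit_product_rule {g g' : ℝ → ℝ} {K : ℝ} (hg : ∀ y, HasDerivAt g (g' y) y)
    (hg' : ∀ y, |g' y| ≤ K) (a b c d : ℝ) :
    (∫ t in (0:ℝ)..1, g (a + t * b)) * d + (∫ t in (0:ℝ)..1, g' (a + t * b) * (c + t * d)) * b =
      g (a + b) * (c + d) - g a * c := by
  have hF : ∀ t ∈ uIcc (0:ℝ) 1, HasDerivAt (fun t => g (a + t * b) * (c + t * d))
      (g' (a + t * b) * b * (c + t * d) + g (a + t * b) * d) t := fun t _ => by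
    have hline : HasDerivAt (fun t : ℝ => a + t * b) b t := by
      simpa using ((hasDerivAt_id t).mul_const b).const_add a
    have hσ : HasDerivAt (fun t => g (a + t * b)) (g' (a + t * b) * b) t :=
      (hg _).comp t hline
    have hlin : HasDerivAt (fun t : ℝ => c + t * d) d t := by
      simpa using ((hasDerivAt_id t).mul_const d).const_add c
    exact hσ.mul hlin
  have hcont : Continuous g := continuous_iff_continuousAt.2 fun y => (hg y).continuousAt
  have hint1 : IntervalIntegrable (fun t => g' (a + t * b) * b * (c + t * d)) volume 0 1 := by
    refine (intervalIntegrable_const (c := K * |b| * (|c| + |d|))).mono_fun' ?_ ?_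
    · have hg'_eq : g' = deriv g := funext fun y => (hg y).deriv.symm
      rw [hg'_eq]
      have hline : Measurable fun t : ℝ => a + t * b := by fun_prop
      exact ((((measurable_deriv g).comp hline).mul_const b).mul
        (by fun_prop : Measurable fun t : ℝ => c + t * d)).aestronglyMeasurable
    · filter_upwards [ae_restrict_mem measurableSet_uIoc] with t ht
      rw [uIoc_of_le zero_le_one] at ht
      have hK : 0 ≤ K := (abs_nonneg _).trans (hg' 0)
      rw [Real.norm_eq_abs, abs_mul, abs_mul]
      gcongr
      exacts [hg' _, abs_add_mul_le (Ioc_subset_Icc_self ht) c d]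
  have hint2 : IntervalIntegrable (fun t => g (a + t * b) * d) volume 0 1 :=
    (by fun_prop : Continuous fun t => g (a + t * b) * d).intervalIntegrable 0 1
  have hFTC := intervalIntegral.integral_eq_sub_of_hasDerivAt hF (hint1.add hint2)
  have hsplit : ∫ t in (0:ℝ)..1, g' (a + t * b) * b * (c + t * d) =
      (∫ t in (0:ℝ)..1, g' (a + t * b) * (c + t * d)) * b := by
    rw [← intervalIntegral.integral_mul_const]
    congr 1; ext t; ring
  rw [intervalIntegral.integral_add hint1 hint2, hsplit, intervalIntegral.integral_mul_const]
    at hFTC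
  simp only [one_mul, zero_mul, add_zero] at hFTC
  linarith

theorem measurable_uncurry_of_hasDerivAt {k k' : ℝ → ℝ → ℝ}
    (hk : Continuous (Function.uncurry k)) (hk' : ∀ x y, HasDerivAt (k x) (k' x y) y) :
    Measurable (Function.uncurry k') := by
  have hk'_eq : Function.uncurry k' = fun p : ℝ × ℝ => deriv (k p.1) p.2 :=
    funext fun p => (hk' p.1 p.2).deriv.symm
  rw [hk'_eq]
  exact measurable_deriv_with_param hk

theorem MeasureTheory.AEStronglyMeasurable.intervalIntegral_unit {ν : Measure ℝ} [SFinite ν]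
    {F : ℝ → ℝ → ℝ}
    (hF : AEStronglyMeasurable (Function.uncurry F) (ν.prod (volume.restrict (Ioc 0 1)))) :
    AEStronglyMeasurable (fun x => ∫ t in (0:ℝ)..1, F x t) ν := by
  simpa only [intervalIntegral.integral_of_le zero_le_one, Function.uncurry_apply_pair] using
    hF.integral_prod_right'

section AveragedCoefficients

variable {k k' : ℝ → ℝ → ℝ} {uh u : ℝ → ℝ}

/-- The coefficient `∫₀¹ κ(x, σ(t)) dt` of `ā`, where `σ(t) = uh + t (u - uh)`. -/
noncomputable def avgCoeff (k : ℝ → ℝ → ℝ) (uh u : ℝ → ℝ) (x : ℝ) : ℝ :=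
  ∫ t in (0:ℝ)..1, k x (uh x + t * (u x - uh x))

/-- The coefficient `∫₀¹ D₂κ(x, σ(t)) σ(t)' dt` of `b̄`. -/
noncomputable def avgDerivCoeff (k' : ℝ → ℝ → ℝ) (uh u : ℝ → ℝ) (x : ℝ) : ℝ :=
  ∫ t in (0:ℝ)..1, k' x (uh x + t * (u x - uh x)) * (deriv uh x + t * (deriv u x - deriv uh x))

theorem abs_avgCoeff_le {M : ℝ} (hk : ∀ x y, |k x y| ≤ M) (x : ℝ) :
    |avgCoeff k uh u x| ≤ M := by
  simpa [avgCoeff] using intervalIntegral.norm_integral_le_of_norm_le_const (a := 0) (b := 1)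
    (f := fun t => k x (uh x + t * (u x - uh x))) fun t _ => hk x _

theorem abs_avgDerivCoeff_le {K : ℝ} (hk' : ∀ x y, |k' x y| ≤ K) (x : ℝ) :
    |avgDerivCoeff k' uh u x| ≤ K * (|deriv uh x| + |deriv u x - deriv uh x|) := by
  have hK : 0 ≤ K := (abs_nonneg _).trans (hk' 0 0)
  simpa [avgDerivCoeff] using intervalIntegral.norm_integral_le_of_norm_le_const (a := 0) (b := 1)
    (f := fun t => k' x (uh x + t * (u x - uh x)) * (deriv uh x + t * (deriv u x - deriv uh x)))
    (C := K * (|deriv uh x| + |deriv u x - deriv uh x|)) fun t ht => by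
    rw [uIoc_of_le zero_le_one] at ht
    rw [Real.norm_eq_abs, abs_mul]
    exact mul_le_mul (hk' _ _) (abs_add_mul_le (Ioc_subset_Icc_self ht) _ _) (abs_nonneg _) hK

theorem avgCoeff_mul_add_avgDerivCoeff_mul {K : ℝ} (hk : ∀ x y, HasDerivAt (k x) (k' x y) y)
    (hk' : ∀ x y, |k' x y| ≤ K) (x : ℝ) :
    avgCoeff k uh u x * (deriv u x - deriv uh x) + avgDerivCoeff k' uh u x * (u x - uh x) =
      k x (u x) * deriv u x - k x (uh x) * deriv uh x := by
  have h := integral_unit_product_rule (hk x) (hk' x) (uh x) (u x - uh x) (deriv uh x)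
    (deriv u x - deriv uh x)
  rw [add_sub_cancel, add_sub_cancel] at h
  exact h

variable {ν : Measure ℝ}

theorem aemeasurable_segment (huh : AEMeasurable uh ν) (hu : AEMeasurable u ν) :
    AEMeasurable (fun p : ℝ × ℝ => (p.1, uh p.1 + p.2 * (u p.1 - uh p.1)))
      (ν.prod (volume.restrict (Ioc 0 1))) :=
  measurable_fst.aemeasurable.prodMk
    (huh.comp_fst.add (measurable_snd.aemeasurable.mul (hu.comp_fst.sub huh.comp_fst)))

theorem aestronglyMeasurable_avgCoeff [SFinite ν] (hk : Continuous (Function.uncurry k))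
    (huh : AEMeasurable uh ν) (hu : AEMeasurable u ν) :
    AEStronglyMeasurable (avgCoeff k uh u) ν := by
  refine AEStronglyMeasurable.intervalIntegral_unit ?_
  exact (hk.measurable.comp_aemeasurable (aemeasurable_segment huh hu)).aestronglyMeasurable

theorem aestronglyMeasurable_avgDerivCoeff [SFinite ν] (hk' : Measurable (Function.uncurry k'))
    (huh : AEMeasurable uh ν) (hu : AEMeasurable u ν) :
    AEStronglyMeasurable (avgDerivCoeff k' uh u) ν := by
  refine AEStronglyMeasurable.intervalIntegral_unit ?_
  have hd : ∀ w : ℝ → ℝ, Measurable fun p : ℝ × ℝ => deriv w p.1 :=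
    fun w => (measurable_deriv w).comp measurable_fst
  exact ((hk'.comp_aemeasurable (aemeasurable_segment huh hu)).mul
    ((hd uh).aemeasurable.add (measurable_snd.aemeasurable.mul
      ((hd u).sub (hd uh)).aemeasurable))).aestronglyMeasurable

end AveragedCoefficients

/-- The breakpoints of the subdomains `Ω_j = (s j, s (j + 1))`. -/
structure IsPartition (m : ℕ) (s : ℕ → ℝ) (L : ℝ) : Prop where
  zero : s 0 = 0
  last : s (m + 1) = L
  le_succ : ∀ j ≤ m, s j ≤ s (j + 1)

namespace IsPartition

variable {m : ℕ} {s : ℕ → ℝ} {L : ℝ} {j : ℕ}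

theorem mem_Icc (hs : IsPartition m s L) (hj : j ≤ m + 1) : s j ∈ Icc 0 L := by
  have hmono : MonotoneOn s (Iic (m + 1)) := monotoneOn_of_le_succ ordConnected_Iic
    fun i _ _ hi => by
      simp only [Order.succ_eq_add_one, mem_Iic] at hi ⊢
      exact hs.le_succ i (by omega)
  have h0 := hmono (mem_Iic.2 (Nat.zero_le _)) (mem_Iic.2 hj) (Nat.zero_le j)
  have hL := hmono (mem_Iic.2 hj) (mem_Iic.2 le_rfl) hj
  exact ⟨hs.zero ▸ h0, hs.last ▸ hL⟩

theorem uIcc_subset (hs : IsPartition m s L) (hj : j ≤ m) : uIcc (s j) (s (j + 1)) ⊆ Icc 0 L := by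
  rw [uIcc_of_le (hs.le_succ j hj)]
  exact Icc_subset_Icc (hs.mem_Icc (by omega)).1 (hs.mem_Icc (by omega)).2

theorem intervalIntegrable {f : ℝ → ℝ} (hs : IsPartition m s L)
    (hf : IntervalIntegrable f volume 0 L) (hj : j ≤ m) :
    IntervalIntegrable f volume (s j) (s (j + 1)) :=
  hf.mono_set ((hs.uIcc_subset hj).trans Icc_subset_uIcc)

theorem sum_integral {f : ℝ → ℝ} (hs : IsPartition m s L) (hf : IntervalIntegrable f volume 0 L) :
    ∑ j ∈ Finset.range (m + 1), ∫ x in s j..s (j + 1), f x = ∫ x in 0..L, f x := by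
  have h := intervalIntegral.sum_integral_adjacent_intervals (a := s) (μ := volume)
    fun j hj => hs.intervalIntegrable hf (Nat.lt_succ_iff.mp hj)
  rwa [hs.zero, hs.last] at h

end IsPartition

section H10

variable {L : ℝ} {u v w : ℝ → ℝ}

theorem aestronglyMeasurable_of_mem_H10 (hw : w ∈ H10 L) :
    AEStronglyMeasurable w (volume.restrict (Ioc 0 L)) :=
  (hw.1.mono Ioc_subset_Icc_self).aestronglyMeasurable measurableSet_Ioc

theorem memLp_top_of_mem_H10 (hw : w ∈ H10 L) : MemLp w ∞ (volume.restrict (Ioc 0 L)) := by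
  obtain ⟨C, hC⟩ := isCompact_Icc.exists_bound_of_continuousOn hw.1
  exact memLp_top_of_bound (aestronglyMeasurable_of_mem_H10 hw) C
    ((ae_restrict_iff' measurableSet_Ioc).2 (ae_of_all _ fun x hx => hC x (Ioc_subset_Icc_self hx)))

theorem memLp_deriv_of_mem_H10 (hL : 0 ≤ L) (hw : w ∈ H10 L) :
    MemLp (deriv w) 2 (volume.restrict (Ioc 0 L)) :=
  (memLp_two_iff_integrable_sq (measurable_deriv w).aestronglyMeasurable).2
    ((intervalIntegrable_iff_integrableOn_Ioc_of_le hL).1 hw.2.2.2.2.2.1)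

theorem deriv_sub_ae_of_mem_H10 (hu : u ∈ H10 L) (hv : v ∈ H10 L) :
    ∀ᵐ x, x ∈ Icc 0 L → deriv (fun y => u y - v y) x = deriv u x - deriv v x := by
  filter_upwards [Measure.ae_ne volume 0, Measure.ae_ne volume L] with x hx0 hxL hx
  have hx' : x ∈ Ioo 0 L := ⟨lt_of_le_of_ne hx.1 hx0.symm, lt_of_le_of_ne hx.2 hxL⟩
  exact deriv_sub (hu.2.2.2.1 x hx') (hv.2.2.2.1 x hx')

theorem integral_deriv_sub_sq_of_mem_H10 (hL : 0 ≤ L) (hu : u ∈ H10 L) (hv : v ∈ H10 L) :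
    ∫ x in 0..L, deriv (fun y => u y - v y) x ^ 2 = ∫ x in 0..L, (deriv u x - deriv v x) ^ 2 :=
  intervalIntegral.integral_congr_ae ((deriv_sub_ae_of_mem_H10 hu hv).mono fun x hx hxL => by
    rw [hx (uIcc_of_le hL ▸ uIoc_subset_uIcc hxL)])

theorem sub_mem_H10 (hL : 0 ≤ L) (hu : u ∈ H10 L) (hv : v ∈ H10 L) :
    (fun x => u x - v x) ∈ H10 L := by
  have hderiv : MemLp (deriv fun x => u x - v x) 2 (volume.restrict (Ioc 0 L)) :=
    ((memLp_deriv_of_mem_H10 hL hu).sub (memLp_deriv_of_mem_H10 hL hv)).ae_eq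
      ((ae_restrict_iff' measurableSet_Ioc).2 ((deriv_sub_ae_of_mem_H10 hu hv).mono
        fun x hx hxL => (hx (Ioc_subset_Icc_self hxL)).symm))
  have hsq : MemLp (fun x => u x - v x) 2 (volume.restrict (Ioc 0 L)) :=
    ((memLp_top_of_mem_H10 hu).sub (memLp_top_of_mem_H10 hv)).mono_exponent le_top
  refine ⟨hu.1.sub hv.1, by simp [hu.2.1, hv.2.1], by simp [hu.2.2.1, hv.2.2.1],
    fun x hx => (hu.2.2.2.1 x hx).sub (hv.2.2.2.1 x hx), ?_, ?_, ?_⟩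
  · exact (intervalIntegrable_iff_integrableOn_Ioc_of_le hL).2 (hderiv.integrable one_le_two)
  · exact (intervalIntegrable_iff_integrableOn_Ioc_of_le hL).2 hderiv.integrable_sq
  · exact (intervalIntegrable_iff_integrableOn_Ioc_of_le hL).2 hsq.integrable_sq

end H10

section Forms

variable {L : ℝ} {m : ℕ} {s : ℕ → ℝ} {κ κ' : ℕ → ℝ → ℝ → ℝ} {k k' : ℝ → ℝ → ℝ}
  {u uh v w φ wh z : ℝ → ℝ} {M K : ℝ}

theorem intervalIntegrable_mul_of_memLp {f g : ℝ → ℝ} (hL : 0 ≤ L)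
    (hf : MemLp f 2 (volume.restrict (Ioc 0 L))) (hg : MemLp g 2 (volume.restrict (Ioc 0 L))) :
    IntervalIntegrable (fun x => f x * g x) volume 0 L :=
  (intervalIntegrable_iff_integrableOn_Ioc_of_le hL).2 (hf.integrable_mul hg)

theorem intervalIntegrable_coeff_mul_deriv_mul_deriv (hL : 0 ≤ L)
    (hk : Continuous (Function.uncurry k)) (hkM : ∀ x y, |k x y| ≤ M) (hz : z ∈ H10 L)
    (hw : w ∈ H10 L) :
    IntervalIntegrable (fun x => k x (z x) * deriv z x * deriv w x) volume 0 L := by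
  have hkz : MemLp (fun x => k x (z x)) ∞ (volume.restrict (Ioc 0 L)) :=
    memLp_top_of_bound (((hk.comp_continuousOn (continuousOn_id.prodMk hz.1)).mono
      Ioc_subset_Icc_self).aestronglyMeasurable measurableSet_Ioc) M (ae_of_all _ fun x => hkM _ _)
  exact intervalIntegrable_mul_of_memLp hL ((memLp_deriv_of_mem_H10 hL hz).mul' hkz)
    (memLp_deriv_of_mem_H10 hL hw)

theorem intervalIntegrable_avgCoeff_mul_deriv_mul_deriv (hL : 0 ≤ L)
    (hk : Continuous (Function.uncurry k)) (hkM : ∀ x y, |k x y| ≤ M) (hu : u ∈ H10 L)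
    (huh : uh ∈ H10 L) (hv : v ∈ H10 L) (hw : w ∈ H10 L) :
    IntervalIntegrable (fun x => avgCoeff k uh u x * deriv v x * deriv w x) volume 0 L := by
  have hA : MemLp (avgCoeff k uh u) ∞ (volume.restrict (Ioc 0 L)) :=
    memLp_top_of_bound (aestronglyMeasurable_avgCoeff hk
      (aestronglyMeasurable_of_mem_H10 huh).aemeasurable
      (aestronglyMeasurable_of_mem_H10 hu).aemeasurable) M (ae_of_all _ (abs_avgCoeff_le hkM))
  exact intervalIntegrable_mul_of_memLp hL ((memLp_deriv_of_mem_H10 hL hv).mul' hA)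
    (memLp_deriv_of_mem_H10 hL hw)

theorem intervalIntegrable_avgDerivCoeff_mul_mul_deriv (hL : 0 ≤ L)
    (hk' : Measurable (Function.uncurry k')) (hk'K : ∀ x y, |k' x y| ≤ K) (hu : u ∈ H10 L)
    (huh : uh ∈ H10 L) (hv : v ∈ H10 L) (hw : w ∈ H10 L) :
    IntervalIntegrable (fun x => avgDerivCoeff k' uh u x * v x * deriv w x) volume 0 L := by
  have hdu := memLp_deriv_of_mem_H10 hL hu
  have hduh := memLp_deriv_of_mem_H10 hL huh
  have hB : MemLp (avgDerivCoeff k' uh u) 2 (volume.restrict (Ioc 0 L)) :=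
    (hduh.abs.add (hdu.sub hduh).abs).of_le_mul (aestronglyMeasurable_avgDerivCoeff hk'
      (aestronglyMeasurable_of_mem_H10 huh).aemeasurable
      (aestronglyMeasurable_of_mem_H10 hu).aemeasurable)
      (ae_of_all _ fun x => (abs_avgDerivCoeff_le hk'K x).trans
        (mul_le_mul_of_nonneg_left (le_abs_self _) ((abs_nonneg _).trans (hk'K 0 0))))
  exact intervalIntegrable_mul_of_memLp hL ((memLp_top_of_mem_H10 hv).mul' hB)
    (memLp_deriv_of_mem_H10 hL hw)

theorem formAbar_add_formBbar_eq_sub_formA (hL : 0 ≤ L) (hs : IsPartition m s L)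
    (hκ : ∀ j, Continuous (Function.uncurry (κ j))) (hκM : ∀ j x y, |κ j x y| ≤ M)
    (hD : ∀ j x y, HasDerivAt (κ j x) (κ' j x y) y) (hDK : ∀ j x y, |κ' j x y| ≤ K)
    (hu : u ∈ H10 L) (huh : uh ∈ H10 L) (hw : w ∈ H10 L) :
    formAbar m s κ uh u (fun x => u x - uh x) w + formBbar m s κ' uh u (fun x => u x - uh x) w =
      formA m s κ u u w - formA m s κ uh uh w := by
  have he := sub_mem_H10 hL hu huh
  simp only [formAbar, formBbar, formA, ← Finset.sum_add_distrib, ← Finset.sum_sub_distrib]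
  refine Finset.sum_congr rfl fun j hj => ?_
  have hj : j ≤ m := Nat.lt_succ_iff.mp (Finset.mem_range.mp hj)
  have hA := hs.intervalIntegrable
    (intervalIntegrable_avgCoeff_mul_deriv_mul_deriv hL (hκ j) (hκM j) hu huh he hw) hj
  have hB := hs.intervalIntegrable (intervalIntegrable_avgDerivCoeff_mul_mul_deriv hL
    (measurable_uncurry_of_hasDerivAt (hκ j) (hD j)) (hDK j) hu huh he hw) hj
  have hC : ∀ z ∈ H10 L, IntervalIntegrable (fun x => κ j x (z x) * deriv z x * deriv w x) volume
      (s j) (s (j + 1)) := fun z hz => hs.intervalIntegrable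
    (intervalIntegrable_coeff_mul_deriv_mul_deriv hL (hκ j) (hκM j) hz hw) hj
  rw [← intervalIntegral.integral_sub (hC u hu) (hC uh huh)]
  refine (intervalIntegral.integral_add hA hB).symm.trans (intervalIntegral.integral_congr_ae ?_)
  filter_upwards [deriv_sub_ae_of_mem_H10 hu huh] with x hx hxj
  rw [hx (hs.uIcc_subset hj (uIoc_subset_uIcc hxj))]
  linear_combination deriv w x *
    avgCoeff_mul_add_avgDerivCoeff_mul (uh := uh) (u := u) (hD j) (hDK j) x

theorem formA_sub_formA_sub_le_integral (hL : 0 ≤ L) (hs : IsPartition m s L) {CL E : ℝ}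
    (hκ : ∀ j, Continuous (Function.uncurry (κ j))) (hκM : ∀ j x y, |κ j x y| ≤ M)
    (hlip : ∀ j x y₁ y₂, |κ j x y₁ - κ j x y₂| ≤ CL * |y₁ - y₂|)
    (hu : u ∈ H10 L) (huh : uh ∈ H10 L) (hφ : φ ∈ H10 L) (hwh : wh ∈ H10 L)
    (hE : ∀ x ∈ Icc 0 L, |u x - uh x| ≤ E) :
    (formA m s κ u u φ - formA m s κ uh uh φ) - (formA m s κ u u wh - formA m s κ uh uh wh) ≤
      ∫ x in 0..L, (M * |deriv u x - deriv uh x| + CL * E * |deriv uh x|) *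
        |deriv φ x - deriv wh x| := by
  have hCL : 0 ≤ CL := by simpa using (abs_nonneg _).trans (hlip 0 0 1 0)
  have hdu := memLp_deriv_of_mem_H10 hL hu
  have hduh := memLp_deriv_of_mem_H10 hL huh
  have hbound : IntervalIntegrable (fun x => (M * |deriv u x - deriv uh x| +
      CL * E * |deriv uh x|) * |deriv φ x - deriv wh x|) volume 0 L :=
    intervalIntegrable_mul_of_memLp hL
    (((hdu.sub hduh).abs.const_mul M).add (hduh.abs.const_mul (CL * E)))
    ((memLp_deriv_of_mem_H10 hL hφ).sub (memLp_deriv_of_mem_H10 hL hwh)).abs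
  rw [← hs.sum_integral hbound]
  simp only [formA, ← Finset.sum_sub_distrib]
  refine Finset.sum_le_sum fun j hj => ?_
  have hj : j ≤ m := Nat.lt_succ_iff.mp (Finset.mem_range.mp hj)
  have hint : ∀ z ∈ H10 L, ∀ w ∈ H10 L,
      IntervalIntegrable (fun x => κ j x (z x) * deriv z x * deriv w x) volume (s j) (s (j + 1)) :=
    fun z hz w hw => hs.intervalIntegrable
      (intervalIntegrable_coeff_mul_deriv_mul_deriv hL (hκ j) (hκM j) hz hw) hj
  rw [← intervalIntegral.integral_sub (hint u hu φ hφ) (hint uh huh φ hφ),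
    ← intervalIntegral.integral_sub (hint u hu wh hwh) (hint uh huh wh hwh),
    ← intervalIntegral.integral_sub ((hint u hu φ hφ).sub (hint uh huh φ hφ))
      ((hint u hu wh hwh).sub (hint uh huh wh hwh))]
  refine intervalIntegral.integral_mono_on (hs.le_succ j hj)
    (((hint u hu φ hφ).sub (hint uh huh φ hφ)).sub ((hint u hu wh hwh).sub (hint uh huh wh hwh)))
    (hs.intervalIntegrable hbound hj) fun x hx => ?_
  have hxL : x ∈ Icc 0 L := hs.uIcc_subset hj (Icc_subset_uIcc hx)
  calc _ = (κ j x (u x) * deriv u x - κ j x (uh x) * deriv uh x) *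
        (deriv φ x - deriv wh x) := by ring
    _ ≤ |κ j x (u x) * deriv u x - κ j x (uh x) * deriv uh x| * |deriv φ x - deriv wh x| :=
        (le_abs_self _).trans (abs_mul _ _).le
    _ ≤ _ := by
        gcongr
        refine (abs_mul_sub_mul_le_of_lipschitz (hκM j x) (hlip j x) _ _ _ _).trans ?_
        gcongr
        exact hE x hxL

theorem formA_sub_formA_sub_le (hL : 0 ≤ L) (hs : IsPartition m s L) {CL E : ℝ} (hM : 0 ≤ M)
    (hE0 : 0 ≤ E) (hκ : ∀ j, Continuous (Function.uncurry (κ j))) (hκM : ∀ j x y, |κ j x y| ≤ M)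
    (hlip : ∀ j x y₁ y₂, |κ j x y₁ - κ j x y₂| ≤ CL * |y₁ - y₂|)
    (hu : u ∈ H10 L) (huh : uh ∈ H10 L) (hφ : φ ∈ H10 L) (hwh : wh ∈ H10 L)
    (hE : ∀ x ∈ Icc 0 L, |u x - uh x| ≤ E) :
    (formA m s κ u u φ - formA m s κ uh uh φ) - (formA m s κ u u wh - formA m s κ uh uh wh) ≤
      (M * √(∫ x in 0..L, (deriv u x - deriv uh x) ^ 2) +
        CL * E * √(∫ x in 0..L, deriv uh x ^ 2)) *
        √(∫ x in 0..L, (deriv φ x - deriv wh x) ^ 2) := by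
  have hCL : 0 ≤ CL := by simpa using (abs_nonneg _).trans (hlip 0 0 1 0)
  have hdu := memLp_deriv_of_mem_H10 hL hu
  have hduh := memLp_deriv_of_mem_H10 hL huh
  have hCS := integral_add_mul_abs_le hM (mul_nonneg hCL hE0) (hdu.sub hduh) hduh
    ((memLp_deriv_of_mem_H10 hL hφ).sub (memLp_deriv_of_mem_H10 hL hwh))
  simp only [Pi.sub_apply, ← intervalIntegral.integral_of_le hL] at hCS
  exact (formA_sub_formA_sub_le_integral hL hs hκ hκM hlip hu huh hφ hwh hE).trans hCS

end Forms

theorem stmt15_general (L : ℝ) (hL : 0 < L) (m : ℕ) (s : ℕ → ℝ)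
    (hs0 : s 0 = 0) (hsm : s (m + 1) = L) (hmono : ∀ j ≤ m, s j < s (j + 1))
    (κmin κmax CL K C₀ CΩ : ℝ) (hκmin : 0 < κmin) (hκle : κmin ≤ κmax)
    (hCL : 0 ≤ CL) (hC0 : 0 < C₀) (hCΩ : 0 ≤ CΩ)
    (κ κ' : ℕ → ℝ → ℝ → ℝ)
    (hκcont : ∀ j, Continuous (fun q : ℝ × ℝ => κ j q.1 q.2))
    (hbd : ∀ j x y, κmin ≤ κ j x y ∧ κ j x y ≤ κmax)
    (hlip : ∀ j x y₁ y₂, |κ j x y₁ - κ j x y₂| ≤ CL * |y₁ - y₂|)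
    (hD2 : ∀ j x y, HasDerivAt (fun z => κ j x z) (κ' j x y) y)
    (hD2bd : ∀ j x y, |κ' j x y| ≤ K)
    -- embedding `‖w‖_∞ ≤ C_Ω |w|₁` on `H¹₀(0, L)`
    (hemb : ∀ w ∈ H10 L, ∀ x ∈ Set.Icc 0 L,
      |w x| ≤ CΩ * Real.sqrt (∫ y in (0:ℝ)..L, (deriv w y) ^ 2))
    (f : ℝ → ℝ) :
    ∃ C > 0, ∀ (u uh φ : ℝ → ℝ) (V : Submodule ℝ (ℝ → ℝ)),
      u ∈ H10 L → (∀ w ∈ V, w ∈ H10 L) → uh ∈ V → φ ∈ H10 L →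
      -- `u` is the weak solution and `uh` the Galerkin solution
      (∀ w ∈ H10 L, formA m s κ u u w = ∫ x in (0:ℝ)..L, f x * w x) →
      (∀ w ∈ V, formA m s κ uh uh w = ∫ x in (0:ℝ)..L, f x * w x) →
      -- a priori bound `‖uh‖₁ ≤ C₀⁻¹ ‖f‖`
      (Real.sqrt ((∫ x in (0:ℝ)..L, (uh x) ^ 2) + ∫ x in (0:ℝ)..L, (deriv (uh) x) ^ 2) ≤
        C₀⁻¹ * Real.sqrt (∫ x in (0:ℝ)..L, (f x) ^ 2)) →
      -- `φ` solves the linearized adjoint problem with data `u − uh`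
      (∀ v ∈ H10 L,
        formAbar m s κ uh u v φ + formBbar m s κ' uh u v φ =
          ∫ x in (0:ℝ)..L, v x * (u x - uh x)) →
      ∀ wh ∈ V,
        (∫ x in (0:ℝ)..L, (u x - uh x) ^ 2) ≤
          C * Real.sqrt (∫ x in (0:ℝ)..L, (deriv φ x - deriv wh x) ^ 2) *
            Real.sqrt (∫ x in (0:ℝ)..L, (deriv u x - deriv uh x) ^ 2) := by
  have hs : IsPartition m s L := ⟨hs0, hsm, fun j hj => (hmono j hj).le⟩
  have hκmax : 0 < κmax := hκmin.trans_le hκle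
  have hκM : ∀ j x y, |κ j x y| ≤ κmax := fun j x y =>
    abs_le.2 ⟨by linarith [(hbd j x y).1], (hbd j x y).2⟩
  refine ⟨κmax + CL * CΩ * (C₀⁻¹ * √(∫ x in (0:ℝ)..L, f x ^ 2)), by positivity, ?_⟩
  intro u uh φ V hu hV huhV hφ hweak hgal hpri hadj wh hwhV
  have huh := hV uh huhV
  have hwh := hV wh hwhV
  set X := √(∫ x in (0:ℝ)..L, (deriv u x - deriv uh x) ^ 2)
  set Nh := √(∫ x in (0:ℝ)..L, deriv uh x ^ 2)
  have he := sub_mem_H10 hL.le hu huh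
  have hE : ∀ x ∈ Icc 0 L, |u x - uh x| ≤ CΩ * X := fun x hx =>
    (hemb _ he x hx).trans_eq (by rw [integral_deriv_sub_sq_of_mem_H10 hL.le hu huh])
  have hNh : Nh ≤ C₀⁻¹ * √(∫ x in (0:ℝ)..L, f x ^ 2) :=
    (Real.sqrt_le_sqrt (le_add_of_nonneg_left
      (intervalIntegral.integral_nonneg hL.le fun x _ => sq_nonneg (uh x)))).trans hpri
  have hgalerkin : formA m s κ u u wh - formA m s κ uh uh wh = 0 := by
    rw [hweak wh hwh, hgal wh hwhV, sub_self]
  calc ∫ x in (0:ℝ)..L, (u x - uh x) ^ 2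
      = formAbar m s κ uh u (fun x => u x - uh x) φ +
          formBbar m s κ' uh u (fun x => u x - uh x) φ := by
        rw [hadj _ he]; simp only [sq]
    _ = (formA m s κ u u φ - formA m s κ uh uh φ) -
          (formA m s κ u u wh - formA m s κ uh uh wh) := by
        rw [formAbar_add_formBbar_eq_sub_formA hL.le hs hκcont hκM hD2 hD2bd hu huh hφ,
          hgalerkin, sub_zero]
    _ ≤ _ := formA_sub_formA_sub_le hL.le hs hκmax.le (by positivity) hκcont hκM hlip hu huh hφ
          hwh hE
    _ = (κmax + CL * CΩ * Nh) * √(∫ x in (0:ℝ)..L, (deriv φ x - deriv wh x) ^ 2) * X := by ring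
    _ ≤ _ := by gcongr

/-- the duality (Aubin–Nitsche) estimate
`‖u − ũ_h‖² ≤ C |φ − w̃_h|₁ |u − ũ_h|₁` for all `w̃_h ∈ Ṽ_h`, where `φ ∈ H¹₀` solves the
linearized adjoint problem with data `u − ũ_h`, and `C` is independent of `u` and `h`. -/
theorem stmt15 (L : ℝ) (hL : 0 < L) (m : ℕ) (s : ℕ → ℝ)
    (hs0 : s 0 = 0) (hsm : s (m + 1) = L) (hmono : ∀ j ≤ m, s j < s (j + 1))
    (κmin κmax CL K C₀ CΩ : ℝ) (hκmin : 0 < κmin) (hκle : κmin ≤ κmax)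
    (hCL : 0 ≤ CL) (hK : 0 ≤ K) (hC0 : 0 < C₀) (hCΩ : 0 ≤ CΩ)
    (κ κ' : ℕ → ℝ → ℝ → ℝ)
    (hκcont : ∀ j, Continuous (fun q : ℝ × ℝ => κ j q.1 q.2))
    (hbd : ∀ j x y, κmin ≤ κ j x y ∧ κ j x y ≤ κmax)
    (hlip : ∀ j x y₁ y₂, |κ j x y₁ - κ j x y₂| ≤ CL * |y₁ - y₂|)
    (hD2 : ∀ j x y, HasDerivAt (fun z => κ j x z) (κ' j x y) y)
    (hD2bd : ∀ j x y, |κ' j x y| ≤ K)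
    -- embedding `‖w‖_∞ ≤ C_Ω |w|₁` on `H¹₀(0, L)`
    (hemb : ∀ w ∈ H10 L, ∀ x ∈ Set.Icc 0 L,
      |w x| ≤ CΩ * Real.sqrt (∫ y in (0:ℝ)..L, (deriv w y) ^ 2))
    (f : ℝ → ℝ)
    (hf : IntervalIntegrable f volume 0 L)
    (hf2 : IntervalIntegrable (fun x => (f x) ^ 2) volume 0 L) :
    ∃ C > 0, ∀ (u uh φ : ℝ → ℝ) (V : Submodule ℝ (ℝ → ℝ)),
      u ∈ H10 L → (∀ w ∈ V, w ∈ H10 L) → uh ∈ V → φ ∈ H10 L →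
      -- `u` is the weak solution and `uh` the Galerkin solution
      (∀ w ∈ H10 L, formA m s κ u u w = ∫ x in (0:ℝ)..L, f x * w x) →
      (∀ w ∈ V, formA m s κ uh uh w = ∫ x in (0:ℝ)..L, f x * w x) →
      -- a priori bound `‖uh‖₁ ≤ C₀⁻¹ ‖f‖`
      (Real.sqrt ((∫ x in (0:ℝ)..L, (uh x) ^ 2) + ∫ x in (0:ℝ)..L, (deriv (uh) x) ^ 2) ≤
        C₀⁻¹ * Real.sqrt (∫ x in (0:ℝ)..L, (f x) ^ 2)) →
      -- `φ` solves the linearized adjoint problem with data `u − uh`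
      (∀ v ∈ H10 L,
        formAbar m s κ uh u v φ + formBbar m s κ' uh u v φ =
          ∫ x in (0:ℝ)..L, v x * (u x - uh x)) →
      ∀ wh ∈ V,
        (∫ x in (0:ℝ)..L, (u x - uh x) ^ 2) ≤
          C * Real.sqrt (∫ x in (0:ℝ)..L, (deriv φ x - deriv wh x) ^ 2) *
            Real.sqrt (∫ x in (0:ℝ)..L, (deriv u x - deriv uh x) ^ 2) :=
  stmt15_general L hL m s hs0 hsm hmono κmin κmax CL K C₀ CΩ hκmin hκle hCL hC0 hCΩ κ κ' hκcont hbd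
    hlip hD2 hD2bd hemb f
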